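/- Let X = (Ω,C) be a symmetric Jordan configuration of rank at most 5 which is not homogeneous (the diagonal 1_Ω is not a class of C). Then X has exactly two fibers Ω_1, Ω_2 (so 1_{Ω_1} and 1_{Ω_2} are classes and Ω = Ω_1 ∪ Ω_2); the set (Ω_1×Ω_2) ∪ (Ω_2×Ω_1) is a single class of C; for i = 1,2 the collection C^{ii} := {C ∈ C : C ⊆ Ω_i×Ω_i} is a symmetric association scheme on Ω_i; and the partition C^{11} ∪ C^{22} ∪ {Ω_1×Ω_2, Ω_2×Ω_1} of Ω×Ω is a coherent configuration whose symmetrization (merging each class with its transpose) is C. In particular X is not proper. -/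

import Mathlib

/-!
The Jordan condition for a class `c` against a diagonal class `1_Δ` says that the number of
endpoints in `Δ` of a pair in `c` does not depend on the pair; for `c` against itself at
diagonal pairs it says that the valency of a symmetric class is constant on each fiber. So a
class joins the same pair of fibers at all of its pairs, and three fibers would give six
classes: three diagonal ones and three joining two different fibers. Hence the fibers are some
`X` and `Xᶜ`, and every class lies in `X × X`, in `Xᶜ × Xᶜ` or in the cross block.

If the cross block held two classes, both would have positive valency at every point, so `X`
and `Xᶜ` would each contain two points and hence a non-diagonal class: six classes again. So
the cross block is one class, and `X × X` contains at most two non-diagonal classes `c`, `d`.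
The intersection numbers `p(c, 1_X)` and `p(c, c)` (half the Jordan number) and the valency of
`c` are constant on classes, hence so is `p(c, d)`, the valency minus the other two: each fiber
carries an association scheme. Splitting the cross class into its two halves gives a coherent
configuration whose symmetrization is the original one, and the matrices constant on its
classes form the required coherent algebra.
-/

open Matrix

noncomputable section

namespace JordanPaper

open scoped Classical

variable {Ω : Type*}

/-- The adjacency matrix (over `F`) of a binary relation on `Ω`. -/
def adj (F : Type*) [Zero F] [One F] (c : Set (Ω × Ω)) : Matrix Ω Ω F :=
  Matrix.of fun a b => if (a, b) ∈ c then 1 else 0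

/-- The all-ones matrix. -/
def allOnes (F : Type*) [One F] : Matrix Ω Ω F :=
  Matrix.of fun _ _ => 1

/-- The diagonal relation `1_Δ` on a subset `Δ ⊆ Ω`. -/
def diagRel (Δ : Set Ω) : Set (Ω × Ω) := {p | p.1 = p.2 ∧ p.1 ∈ Δ}

/-- The transposed relation. -/
def transposeRel (c : Set (Ω × Ω)) : Set (Ω × Ω) := {p | (p.2, p.1) ∈ c}

/-- `outSet c α = c(α) = {β | (α,β) ∈ c}`. -/
def outSet (c : Set (Ω × Ω)) (α : Ω) : Set Ω := {β | (α, β) ∈ c}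

/-- A partition of `Ω × Ω` into nonempty pairwise disjoint classes. -/
def IsPartition (P : Set (Set (Ω × Ω))) : Prop :=
  (∀ c ∈ P, c.Nonempty) ∧ (∀ c ∈ P, ∀ d ∈ P, c ≠ d → c ∩ d = ∅) ∧ ⋃₀ P = Set.univ

/-- A partition of `Δ × Δ` into nonempty pairwise disjoint classes. -/
def IsPartitionOn (Δ : Set Ω) (P : Set (Set (Ω × Ω))) : Prop :=
  (∀ c ∈ P, c.Nonempty) ∧ (∀ c ∈ P, ∀ d ∈ P, c ≠ d → c ∩ d = ∅) ∧ ⋃₀ P = Δ ×ˢ Δ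

/-- A rainbow: a partition of `Ω × Ω` such that the diagonal is a union of classes
and the set of classes is closed under transposition. -/
def IsRainbow (P : Set (Set (Ω × Ω))) : Prop :=
  IsPartition P ∧
  (∀ c ∈ P, (c ∩ diagRel (Set.univ : Set Ω)).Nonempty → c ⊆ diagRel (Set.univ : Set Ω)) ∧
  (∀ c ∈ P, transposeRel c ∈ P)

/-- `|c(α) ∩ dᵀ(β)|`. -/
def cnum (c d : Set (Ω × Ω)) (α β : Ω) : ℕ :=
  (outSet c α ∩ outSet (transposeRel d) β).ncard

/-- `|c(α) ∩ dᵀ(β)| + |d(α) ∩ cᵀ(β)|`. -/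
def jnum (c d : Set (Ω × Ω)) (α β : Ω) : ℕ :=
  cnum c d α β + cnum d c α β

/-- The coherence (intersection-number) condition. -/
def IsCoherentCond (P : Set (Set (Ω × Ω))) : Prop :=
  ∀ c ∈ P, ∀ d ∈ P, ∀ f ∈ P, ∀ p ∈ f, ∀ q ∈ f,
    cnum c d (p : Ω × Ω).1 (p : Ω × Ω).2 = cnum c d (q : Ω × Ω).1 (q : Ω × Ω).2

/-- The Jordan (symmetrized intersection-number) condition. -/
def IsJordanCond (P : Set (Set (Ω × Ω))) : Prop :=
  ∀ c ∈ P, ∀ d ∈ P, ∀ f ∈ P, ∀ p ∈ f, ∀ q ∈ f,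
    jnum c d (p : Ω × Ω).1 (p : Ω × Ω).2 = jnum c d (q : Ω × Ω).1 (q : Ω × Ω).2

/-- A coherent configuration. -/
def IsCoherentConfig (P : Set (Set (Ω × Ω))) : Prop := IsRainbow P ∧ IsCoherentCond P

/-- A Jordan configuration. -/
def IsJordanConfig (P : Set (Set (Ω × Ω))) : Prop := IsRainbow P ∧ IsJordanCond P

/-- An association scheme on a subset `Δ` (homogeneous coherent configuration on `Δ`). -/
def IsAssocSchemeOn (Δ : Set Ω) (P : Set (Set (Ω × Ω))) : Prop :=
  IsPartitionOn Δ P ∧ diagRel Δ ∈ P ∧ (∀ c ∈ P, transposeRel c ∈ P) ∧ IsCoherentCond P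

/-- The Jordan product of matrices. -/
def jmul (F : Type*) [Field F] [Fintype Ω] (x y : Matrix Ω Ω F) : Matrix Ω Ω F :=
  (2 : F)⁻¹ • (x * y + y * x)

/-- A coherent algebra. -/
def IsCoherentAlgebra (F : Type*) [Field F] [Fintype Ω] [DecidableEq Ω]
    (A : Submodule F (Matrix Ω Ω F)) : Prop :=
  (1 : Matrix Ω Ω F) ∈ A ∧ allOnes F ∈ A ∧ (∀ x ∈ A, xᵀ ∈ A) ∧
  (∀ x ∈ A, ∀ y ∈ A, x * y ∈ A) ∧ (∀ x ∈ A, ∀ y ∈ A, Matrix.hadamard x y ∈ A)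

/-- A coherent Jordan algebra. -/
def IsCoherentJAlgebra (F : Type*) [Field F] [Fintype Ω] [DecidableEq Ω]
    (A : Submodule F (Matrix Ω Ω F)) : Prop :=
  (1 : Matrix Ω Ω F) ∈ A ∧ allOnes F ∈ A ∧ (∀ x ∈ A, xᵀ ∈ A) ∧
  (∀ x ∈ A, ∀ y ∈ A, jmul F x y ∈ A) ∧ (∀ x ∈ A, ∀ y ∈ A, Matrix.hadamard x y ∈ A)

@[simp] lemma mem_diagRel {Δ : Set Ω} {a b : Ω} : (a, b) ∈ diagRel Δ ↔ a = b ∧ a ∈ Δ := Iff.rfl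

@[simp] lemma mem_transposeRel {c : Set (Ω × Ω)} {a b : Ω} :
    (a, b) ∈ transposeRel c ↔ (b, a) ∈ c := Iff.rfl

@[simp] lemma mem_outSet {c : Set (Ω × Ω)} {a b : Ω} : b ∈ outSet c a ↔ (a, b) ∈ c := Iff.rfl

lemma diagRel_injective : Function.Injective (diagRel (Ω := Ω)) := fun X Y h =>
  Set.ext fun a => by simpa using Set.ext_iff.1 h (a, a)

@[simp] lemma transposeRel_transposeRel (c : Set (Ω × Ω)) : transposeRel (transposeRel c) = c :=
  rfl

lemma transposeRel_union (c d : Set (Ω × Ω)) :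
    transposeRel (c ∪ d) = transposeRel c ∪ transposeRel d := rfl

@[simp] lemma transposeRel_prod (A B : Set Ω) : transposeRel (A ×ˢ B) = B ×ˢ A := by
  ext ⟨a, b⟩
  simp [and_comm]

lemma outSet_prod {A B : Set Ω} (a : Ω) : outSet (A ×ˢ B) a = if a ∈ A then B else ∅ := by
  ext γ
  split_ifs with h <;> simp [h]

def crossRel (X : Set Ω) : Set (Ω × Ω) := X ×ˢ Xᶜ ∪ Xᶜ ×ˢ X

lemma crossRel_compl (X : Set Ω) : crossRel Xᶜ = crossRel X := by
  rw [crossRel, crossRel, compl_compl, Set.union_comm]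

def endpointCount (Δ : Set Ω) (p : Ω × Ω) : ℕ :=
  (if p.1 ∈ Δ then 1 else 0) + (if p.2 ∈ Δ then 1 else 0)

def classesWithin (P : Set (Set (Ω × Ω))) (R : Set (Ω × Ω)) : Set (Set (Ω × Ω)) :=
  {c | c ∈ P ∧ c ⊆ R}

section Blocks

variable {X : Set Ω} {p : Ω × Ω}

lemma endpointCount_eq_two_iff : endpointCount X p = 2 ↔ p ∈ X ×ˢ X := by
  unfold endpointCount
  split_ifs <;> simp_all

lemma endpointCount_eq_zero_iff : endpointCount X p = 0 ↔ p ∈ Xᶜ ×ˢ Xᶜ := by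
  unfold endpointCount
  split_ifs <;> simp_all

lemma endpointCount_eq_one_iff : endpointCount X p = 1 ↔ p ∈ crossRel X := by
  unfold endpointCount crossRel
  split_ifs <;> simp_all

lemma mem_prod_or_mem_compl_prod_or_mem_crossRel :
    p ∈ X ×ˢ X ∨ p ∈ Xᶜ ×ˢ Xᶜ ∨ p ∈ crossRel X := by
  simp only [crossRel, Set.mem_union, Set.mem_prod, Set.mem_compl_iff]
  tauto

lemma diagRel_subset_prod {Y : Set Ω} (h : Y ⊆ X) : diagRel Y ⊆ X ×ˢ X := by
  rintro ⟨a, b⟩ hab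
  obtain ⟨rfl, ha⟩ := mem_diagRel.1 hab
  exact ⟨h ha, h ha⟩

lemma disjoint_prod_compl_prod : Disjoint (X ×ˢ X) (Xᶜ ×ˢ Xᶜ) :=
  Set.disjoint_left.2 fun _ h1 h2 => h2.1 h1.1

lemma disjoint_prod_crossRel : Disjoint (X ×ˢ X) (crossRel X) :=
  Set.disjoint_left.2 fun _ h1 h2 => by rcases h2 with h2 | h2 <;> simp_all

lemma disjoint_compl_prod_crossRel : Disjoint (Xᶜ ×ˢ Xᶜ) (crossRel X) :=
  Set.disjoint_left.2 fun _ h1 h2 => by rcases h2 with h2 | h2 <;> simp_all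

end Blocks

section IntersectionNumbers

variable {c d e : Set (Ω × Ω)} {a b : Ω}

lemma cnum_eq_zero (h : ∀ γ, (a, γ) ∈ c → (γ, b) ∉ d) : cnum c d a b = 0 := by
  rw [cnum]
  convert Set.ncard_empty Ω
  ext γ
  simpa using h γ

lemma cnum_diagRel_right (Δ : Set Ω) :
    cnum c (diagRel Δ) a b = if (a, b) ∈ c ∧ b ∈ Δ then 1 else 0 := by
  rw [cnum]
  split_ifs with h
  · convert Set.ncard_singleton b
    ext γ
    simp only [Set.mem_inter_iff, mem_outSet, mem_transposeRel, mem_diagRel,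
      Set.mem_singleton_iff]
    constructor
    · exact fun h' => h'.2.1
    · rintro rfl; exact ⟨h.1, rfl, h.2⟩
  · refine cnum_eq_zero fun γ hγ hγb => h ?_
    obtain ⟨rfl, hb⟩ := mem_diagRel.1 hγb
    exact ⟨hγ, hb⟩

lemma cnum_diagRel_left (Δ : Set Ω) :
    cnum (diagRel Δ) c a b = if a ∈ Δ ∧ (a, b) ∈ c then 1 else 0 := by
  rw [cnum]
  split_ifs with h
  · convert Set.ncard_singleton a
    ext γ
    simp only [Set.mem_inter_iff, mem_outSet, mem_transposeRel, mem_diagRel,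
      Set.mem_singleton_iff]
    constructor
    · exact fun h' => h'.1.1.symm
    · rintro rfl; exact ⟨⟨rfl, h.1⟩, h.2⟩
  · refine cnum_eq_zero fun γ hγ hγb => h ?_
    obtain ⟨rfl, ha⟩ := mem_diagRel.1 hγ
    exact ⟨ha, hγb⟩

lemma cnum_self_self (hc : transposeRel c = c) (a : Ω) : cnum c c a a = (outSet c a).ncard := by
  rw [cnum, hc, Set.inter_self]

lemma cnum_prod_right (A B : Set Ω) :
    cnum c (A ×ˢ B) a b = if b ∈ B then (outSet c a ∩ A).ncard else 0 := by
  rw [cnum]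
  split_ifs with h
  · congr 1
    ext γ
    simp [h]
  · exact cnum_eq_zero fun γ _ hγ => h hγ.2

lemma cnum_prod_left (A B : Set Ω) :
    cnum (A ×ˢ B) d a b = if a ∈ A then (B ∩ outSet (transposeRel d) b).ncard else 0 := by
  rw [cnum]
  split_ifs with h
  · congr 1
    ext γ
    simp [h]
  · exact cnum_eq_zero fun γ hγ _ => h hγ.1

lemma cnum_union_right [Finite Ω] (h : Disjoint d e) :
    cnum c (d ∪ e) a b = cnum c d a b + cnum c e a b := by
  unfold cnum
  rw [transposeRel_union, ← Set.ncard_union_eq]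
  · congr 1
    ext γ
    simp [and_or_left]
  · exact Set.disjoint_left.2 fun γ h1 h2 => Set.disjoint_left.1 h h1.2 h2.2

end IntersectionNumbers

section Partitions

variable {P : Set (Set (Ω × Ω))} {c d f : Set (Ω × Ω)} {p q : Ω × Ω}

lemma IsPartition.exists_mem (hP : IsPartition P) (p : Ω × Ω) : ∃ c ∈ P, p ∈ c :=
  Set.sUnion_eq_univ_iff.1 hP.2.2 p

lemma IsPartition.eq_of_mem_of_mem (hP : IsPartition P) (hc : c ∈ P) (hd : d ∈ P)
    (hpc : p ∈ c) (hpd : p ∈ d) : c = d := by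
  by_contra hcd
  exact (hP.2.1 c hc d hd hcd).subset ⟨hpc, hpd⟩

lemma IsPartition.disjoint (hP : IsPartition P) (hc : c ∈ P) (hd : d ∈ P) (hcd : c ≠ d) :
    Disjoint c d :=
  Set.disjoint_iff_inter_eq_empty.2 (hP.2.1 c hc d hd hcd)

lemma IsPartition.mem_iff_mem (hP : IsPartition P) (hc : c ∈ P) (hf : f ∈ P)
    (hp : p ∈ f) (hq : q ∈ f) : p ∈ c ↔ q ∈ c :=
  ⟨fun h => hP.eq_of_mem_of_mem hf hc hp h ▸ hq, fun h => hP.eq_of_mem_of_mem hf hc hq h ▸ hp⟩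

lemma IsPartition.eq_of_diagRel_mem {X Y : Set Ω} (hP : IsPartition P) (hX : diagRel X ∈ P)
    (hY : diagRel Y ∈ P) {a : Ω} (haX : a ∈ X) (haY : a ∈ Y) : X = Y :=
  diagRel_injective (hP.eq_of_mem_of_mem hX hY (p := (a, a)) ⟨rfl, haX⟩ ⟨rfl, haY⟩)

lemma IsPartition.disjoint_of_diagRel_mem {X Y : Set Ω} (hP : IsPartition P)
    (hX : diagRel X ∈ P) (hY : diagRel Y ∈ P) (hXY : X ≠ Y) : Disjoint X Y :=
  Set.disjoint_left.2 fun _ haX haY => hXY (hP.eq_of_diagRel_mem hX hY haX haY)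

lemma IsPartition.nonempty_of_diagRel_mem {X : Set Ω} (hP : IsPartition P)
    (hX : diagRel X ∈ P) : X.Nonempty := by
  obtain ⟨⟨a, b⟩, -, ha⟩ := hP.1 _ hX
  exact ⟨a, ha⟩

lemma disjoint_classesWithin (hP : IsPartition P) {R S : Set (Ω × Ω)} (h : Disjoint R S) :
    Disjoint (classesWithin P R) (classesWithin P S) :=
  Set.disjoint_left.2 fun c hcR hcS => by
    obtain ⟨p, hp⟩ := hP.1 c hcR.1
    exact Set.disjoint_left.1 h (hcR.2 hp) (hcS.2 hp)

lemma IsRainbow.exists_diagRel_mem (hR : IsRainbow P) (a : Ω) :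
    ∃ Δ, a ∈ Δ ∧ diagRel Δ ∈ P := by
  obtain ⟨c, hc, ha⟩ := hR.1.exists_mem (a, a)
  have hdiag : c ⊆ diagRel Set.univ := hR.2.1 c hc ⟨(a, a), ha, rfl, trivial⟩
  refine ⟨{x | (x, x) ∈ c}, ha, ?_⟩
  convert hc using 1
  ext ⟨x, y⟩
  constructor
  · intro h
    obtain ⟨rfl, hx⟩ := mem_diagRel.1 h
    exact hx
  · intro h
    obtain rfl : x = y := (hdiag h).1
    exact ⟨rfl, h⟩

lemma IsRainbow.fst_eq_snd_iff (hR : IsRainbow P) (hf : f ∈ P) (hp : p ∈ f) (hq : q ∈ f) :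
    p.1 = p.2 ↔ q.1 = q.2 := by
  have key : ∀ {r s : Ω × Ω}, r ∈ f → s ∈ f → r.1 = r.2 → s.1 = s.2 := fun hr hs h =>
    (hR.2.1 f hf ⟨_, hr, h, trivial⟩ hs).1
  exact ⟨key hp hq, key hq hp⟩

end Partitions

section Jordan

variable {P : Set (Set (Ω × Ω))} {c : Set (Ω × Ω)} {Δ X : Set Ω} {p q : Ω × Ω}

lemma jnum_diagRel {a b : Ω} (h : (a, b) ∈ c) :
    jnum c (diagRel Δ) a b = endpointCount Δ (a, b) := by
  rw [jnum, cnum_diagRel_right, cnum_diagRel_left, endpointCount]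
  simp only [h, true_and, and_true]
  omega

lemma endpointCount_eq_of_mem (hJ : IsJordanCond P) (hc : c ∈ P) (hΔ : diagRel Δ ∈ P)
    (hp : p ∈ c) (hq : q ∈ c) : endpointCount Δ p = endpointCount Δ q := by
  have := hJ c hc (diagRel Δ) hΔ c hc p hp q hq
  rwa [jnum_diagRel hp, jnum_diagRel hq] at this

lemma cnum_self_eq_of_mem (hJ : IsJordanCond P) (hc : c ∈ P) {f : Set (Ω × Ω)} (hf : f ∈ P)
    (hp : p ∈ f) (hq : q ∈ f) : cnum c c p.1 p.2 = cnum c c q.1 q.2 := by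
  have := hJ c hc c hc f hf p hp q hq
  simp only [jnum] at this
  omega

lemma ncard_outSet_eq_of_mem_fiber (hJ : IsJordanCond P) (hc : c ∈ P)
    (hcs : transposeRel c = c) (hΔ : diagRel Δ ∈ P) {a a' : Ω} (ha : a ∈ Δ) (ha' : a' ∈ Δ) :
    (outSet c a).ncard = (outSet c a').ncard := by
  have := hJ c hc c hc (diagRel Δ) hΔ (a, a) ⟨rfl, ha⟩ (a', a') ⟨rfl, ha'⟩
  simp only [jnum, cnum_self_self hcs] at this
  omega

lemma subset_of_endpointCount_iff (hJ : IsJordanCond P) (hX : diagRel X ∈ P) (hc : c ∈ P)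
    {R : Set (Ω × Ω)} {k : ℕ} (hR : ∀ q, endpointCount X q = k ↔ q ∈ R) (hp : p ∈ c)
    (hpR : p ∈ R) : c ⊆ R :=
  fun q hq => (hR q).1 ((endpointCount_eq_of_mem hJ hc hX hq hp).trans ((hR p).2 hpR))

lemma subset_prod_of_mem (hJ : IsJordanCond P) (hX : diagRel X ∈ P) (hc : c ∈ P)
    (hp : p ∈ c) (hpX : p ∈ X ×ˢ X) : c ⊆ X ×ˢ X :=
  subset_of_endpointCount_iff hJ hX hc (fun _ => endpointCount_eq_two_iff) hp hpX

lemma subset_compl_prod_of_mem (hJ : IsJordanCond P) (hX : diagRel X ∈ P) (hc : c ∈ P)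
    (hp : p ∈ c) (hpX : p ∈ Xᶜ ×ˢ Xᶜ) : c ⊆ Xᶜ ×ˢ Xᶜ :=
  subset_of_endpointCount_iff hJ hX hc (fun _ => endpointCount_eq_zero_iff) hp hpX

lemma subset_crossRel_of_mem (hJ : IsJordanCond P) (hX : diagRel X ∈ P) (hc : c ∈ P)
    (hp : p ∈ c) (hpX : p ∈ crossRel X) : c ⊆ crossRel X :=
  subset_of_endpointCount_iff hJ hX hc (fun _ => endpointCount_eq_one_iff) hp hpX

lemma subset_prod_or_subset_compl_prod_or_subset_crossRel (hP : IsPartition P)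
    (hJ : IsJordanCond P) (hX : diagRel X ∈ P) (hc : c ∈ P) :
    c ⊆ X ×ˢ X ∨ c ⊆ Xᶜ ×ˢ Xᶜ ∨ c ⊆ crossRel X := by
  obtain ⟨p, hp⟩ := hP.1 c hc
  rcases mem_prod_or_mem_compl_prod_or_mem_crossRel (X := X) (p := p) with h | h | h
  · exact Or.inl (subset_prod_of_mem hJ hX hc hp h)
  · exact Or.inr (Or.inl (subset_compl_prod_of_mem hJ hX hc hp h))
  · exact Or.inr (Or.inr (subset_crossRel_of_mem hJ hX hc hp h))

lemma sUnion_classesWithin_prod (hP : IsPartition P) (hJ : IsJordanCond P) (hX : diagRel X ∈ P) :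
    ⋃₀ classesWithin P (X ×ˢ X) = X ×ˢ X := by
  ext p
  constructor
  · rintro ⟨c, ⟨-, hcX⟩, hp⟩
    exact hcX hp
  · intro hp
    obtain ⟨c, hc, hpc⟩ := hP.exists_mem p
    exact ⟨c, ⟨hc, subset_prod_of_mem hJ hX hc hpc hp⟩, hpc⟩

end Jordan

section Counting

variable [Finite Ω] {P : Set (Set (Ω × Ω))} {X : Set Ω}

lemma ncard_eq_add (hP : IsPartition P) (hJ : IsJordanCond P) (hX : diagRel X ∈ P) :
    P.ncard = (classesWithin P (X ×ˢ X)).ncard + (classesWithin P (Xᶜ ×ˢ Xᶜ)).ncard +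
      (classesWithin P (crossRel X)).ncard := by
  have hunion : P = classesWithin P (X ×ˢ X) ∪ classesWithin P (Xᶜ ×ˢ Xᶜ) ∪
      classesWithin P (crossRel X) := by
    ext c
    constructor
    · intro hc
      rcases subset_prod_or_subset_compl_prod_or_subset_crossRel hP hJ hX hc with h | h | h
      · exact Or.inl (Or.inl ⟨hc, h⟩)
      · exact Or.inl (Or.inr ⟨hc, h⟩)
      · exact Or.inr ⟨hc, h⟩
    · rintro ((h | h) | h) <;> exact h.1
  conv_lhs => rw [hunion]
  rw [Set.ncard_union_eq, Set.ncard_union_eq]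
  · exact disjoint_classesWithin hP disjoint_prod_compl_prod
  · exact (disjoint_classesWithin hP disjoint_prod_crossRel).union_left
      (disjoint_classesWithin hP disjoint_compl_prod_crossRel)

lemma one_lt_ncard_classesWithin_prod (hP : IsPartition P) (hJ : IsJordanCond P)
    (hX : diagRel X ∈ P) {u v : Ω} (hu : u ∈ X) (hv : v ∈ X) (huv : u ≠ v) :
    1 < (classesWithin P (X ×ˢ X)).ncard := by
  obtain ⟨c, hc, huvc⟩ := hP.exists_mem (u, v)
  refine (Set.one_lt_ncard_iff (Set.toFinite _)).2 ⟨diagRel X, c,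
    ⟨hX, diagRel_subset_prod subset_rfl⟩, ⟨hc, subset_prod_of_mem hJ hX hc huvc ⟨hu, hv⟩⟩, ?_⟩
  rintro rfl
  exact huv huvc.1

lemma six_le_ncard_of_three_fibers (hP : IsPartition P) (hJ : IsJordanCond P) {Y Z : Set Ω}
    (hX : diagRel X ∈ P) (hY : diagRel Y ∈ P) (hZ : diagRel Z ∈ P)
    (hXY : X ≠ Y) (hXZ : X ≠ Z) (hYZ : Y ≠ Z) : 6 ≤ P.ncard := by
  obtain ⟨x, hx⟩ := hP.nonempty_of_diagRel_mem hX
  obtain ⟨y, hy⟩ := hP.nonempty_of_diagRel_mem hY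
  obtain ⟨z, hz⟩ := hP.nonempty_of_diagRel_mem hZ
  have hYX : Y ⊆ Xᶜ :=
    Set.subset_compl_iff_disjoint_left.2 (hP.disjoint_of_diagRel_mem hX hY hXY)
  have hZX : Z ⊆ Xᶜ :=
    Set.subset_compl_iff_disjoint_left.2 (hP.disjoint_of_diagRel_mem hX hZ hXZ)
  have hzY : z ∉ Y :=
    Set.subset_compl_iff_disjoint_left.2 (hP.disjoint_of_diagRel_mem hY hZ hYZ) hz
  obtain ⟨cxy, hcxy, hxy⟩ := hP.exists_mem (x, y)
  obtain ⟨cxz, hcxz, hxz⟩ := hP.exists_mem (x, z)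
  obtain ⟨cyz, hcyz, hyz⟩ := hP.exists_mem (y, z)
  have hwithinX : 0 < (classesWithin P (X ×ˢ X)).ncard :=
    (Set.ncard_pos (Set.toFinite _)).2 ⟨diagRel X, hX, diagRel_subset_prod subset_rfl⟩
  have hwithinXc : 2 < (classesWithin P (Xᶜ ×ˢ Xᶜ)).ncard := by
    refine (Set.two_lt_ncard_iff (Set.toFinite _)).2 ⟨diagRel Y, diagRel Z, cyz,
      ⟨hY, diagRel_subset_prod hYX⟩, ⟨hZ, diagRel_subset_prod hZX⟩,
      ⟨hcyz, subset_compl_prod_of_mem hJ hX hcyz hyz ⟨hYX hy, hZX hz⟩⟩,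
      fun h => hYZ (diagRel_injective h), ?_, ?_⟩ <;>
    · rintro rfl
      exact hzY ((mem_diagRel.1 hyz).1 ▸ hy)
  have hcross : 1 < (classesWithin P (crossRel X)).ncard := by
    refine (Set.one_lt_ncard_iff (Set.toFinite _)).2 ⟨cxy, cxz,
      ⟨hcxy, subset_crossRel_of_mem hJ hX hcxy hxy (Or.inl ⟨hx, hYX hy⟩)⟩,
      ⟨hcxz, subset_crossRel_of_mem hJ hX hcxz hxz (Or.inl ⟨hx, hZX hz⟩)⟩, ?_⟩
    rintro rfl
    have := endpointCount_eq_of_mem hJ hcxy hY hxy hxz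
    have hxY : x ∉ Y := fun hxY => hYX hxY hx
    simp [endpointCount, hxY, hy, hzY] at this
  rw [ncard_eq_add hP hJ hX]
  omega

lemma IsRainbow.eq_compl_of_diagRel_mem (hR : IsRainbow P) (hJ : IsJordanCond P)
    (hrank : P.ncard ≤ 5) {Y : Set Ω} (hX : diagRel X ∈ P) (hY : diagRel Y ∈ P)
    (hXY : X ≠ Y) : Y = Xᶜ := by
  refine Set.Subset.antisymm (fun _ hy hyX => hXY (hR.1.eq_of_diagRel_mem hX hY hyX hy))
    fun w hw => ?_
  obtain ⟨Z, hwZ, hZ⟩ := hR.exists_diagRel_mem w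
  by_contra hwY
  have := six_le_ncard_of_three_fibers hR.1 hJ hX hY hZ hXY (fun h => hw (h ▸ hwZ))
    (fun h => hwY (h ▸ hwZ))
  omega

end Counting

structure TwoFiberJordan (P : Set (Set (Ω × Ω))) (X : Set Ω) : Prop where
  rainbow : IsRainbow P
  jordan : IsJordanCond P
  symm : ∀ c ∈ P, transposeRel c = c
  ncard_le : P.ncard ≤ 5
  diagRel_mem : diagRel X ∈ P
  diagRel_compl_mem : diagRel Xᶜ ∈ P

namespace TwoFiberJordan

variable {P : Set (Set (Ω × Ω))} {X : Set Ω} {c d f : Set (Ω × Ω)}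

lemma compl (S : TwoFiberJordan P X) : TwoFiberJordan P Xᶜ :=
  { S with
    diagRel_mem := S.diagRel_compl_mem
    diagRel_compl_mem := by rw [compl_compl]; exact S.diagRel_mem }

lemma nonempty (S : TwoFiberJordan P X) : X.Nonempty :=
  S.rainbow.1.nonempty_of_diagRel_mem S.diagRel_mem

lemma swap_mem (S : TwoFiberJordan P X) (hc : c ∈ P) {a b : Ω} (h : (a, b) ∈ c) : (b, a) ∈ c := by
  rw [← S.symm c hc] at h
  exact h

lemma ncard_outSet_eq (S : TwoFiberJordan P X) (hc : c ∈ P) {a a' : Ω} (h : a ∈ X ↔ a' ∈ X) :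
    (outSet c a).ncard = (outSet c a').ncard := by
  by_cases ha : a ∈ X
  · exact ncard_outSet_eq_of_mem_fiber S.jordan hc (S.symm c hc) S.diagRel_mem ha (h.1 ha)
  · exact ncard_outSet_eq_of_mem_fiber S.jordan hc (S.symm c hc) S.diagRel_compl_mem ha
      (mt h.2 ha)

lemma eq_or_eq_of_diagRel_mem (S : TwoFiberJordan P X) {Δ : Set Ω} (hne : Δ.Nonempty)
    (hΔ : diagRel Δ ∈ P) : Δ = X ∨ Δ = Xᶜ := by
  obtain ⟨a, ha⟩ := hne
  by_cases haX : a ∈ X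
  · exact Or.inl (S.rainbow.1.eq_of_diagRel_mem hΔ S.diagRel_mem ha haX)
  · exact Or.inr (S.rainbow.1.eq_of_diagRel_mem hΔ S.diagRel_compl_mem ha haX)

variable [Finite Ω]

lemma outSet_nonempty_of_subset_crossRel (S : TwoFiberJordan P X) (hc : c ∈ P)
    (hcr : c ⊆ crossRel X) {x : Ω} (hx : x ∈ X) : (outSet c x).Nonempty := by
  obtain ⟨⟨a, b⟩, hab⟩ := S.rainbow.1.1 c hc
  obtain ⟨w, hw, hne⟩ : ∃ w ∈ X, (outSet c w).Nonempty := by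
    rcases hcr hab with ⟨ha, -⟩ | ⟨-, hb⟩
    · exact ⟨a, ha, b, hab⟩
    · exact ⟨b, hb, a, S.swap_mem hc hab⟩
  rw [← Set.ncard_pos (Set.toFinite _)] at hne ⊢
  rwa [S.ncard_outSet_eq hc (iff_of_true hx hw)]

lemma one_lt_ncard_classesWithin_compl_prod (S : TwoFiberJordan P X) (hc : c ∈ P)
    (hcr : c ⊆ crossRel X) (hd : d ∈ P) (hdr : d ⊆ crossRel X) (hcd : c ≠ d) :
    1 < (classesWithin P (Xᶜ ×ˢ Xᶜ)).ncard := by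
  obtain ⟨x, hx⟩ := S.nonempty
  obtain ⟨u, hu⟩ := S.outSet_nonempty_of_subset_crossRel hc hcr hx
  obtain ⟨v, hv⟩ := S.outSet_nonempty_of_subset_crossRel hd hdr hx
  have hXc : ∀ {w}, (x, w) ∈ crossRel X → w ∈ Xᶜ := by
    rintro w (h | h)
    exacts [h.2, absurd hx h.1]
  refine one_lt_ncard_classesWithin_prod S.rainbow.1 S.jordan S.diagRel_compl_mem
    (hXc (hcr hu)) (hXc (hdr hv)) ?_
  rintro rfl
  exact hcd (S.rainbow.1.eq_of_mem_of_mem hc hd hu hv)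

lemma eq_of_subset_crossRel (S : TwoFiberJordan P X) (hc : c ∈ P) (hcr : c ⊆ crossRel X)
    (hd : d ∈ P) (hdr : d ⊆ crossRel X) : c = d := by
  by_contra hcd
  have hXc := S.one_lt_ncard_classesWithin_compl_prod hc hcr hd hdr hcd
  have hX := S.compl.one_lt_ncard_classesWithin_compl_prod hc (by rwa [crossRel_compl]) hd
    (by rwa [crossRel_compl]) hcd
  rw [compl_compl] at hX
  have hcross : 1 < (classesWithin P (crossRel X)).ncard :=
    (Set.one_lt_ncard_iff (Set.toFinite _)).2 ⟨c, d, ⟨hc, hcr⟩, ⟨hd, hdr⟩, hcd⟩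
  have := ncard_eq_add S.rainbow.1 S.jordan S.diagRel_mem
  have := S.ncard_le
  omega

lemma crossRel_mem (S : TwoFiberJordan P X) : crossRel X ∈ P := by
  obtain ⟨x, hx⟩ := S.nonempty
  obtain ⟨y, hy⟩ := S.compl.nonempty
  obtain ⟨c, hc, hxy⟩ := S.rainbow.1.exists_mem (x, y)
  have hcr := subset_crossRel_of_mem S.jordan S.diagRel_mem hc hxy (Or.inl ⟨hx, hy⟩)
  suffices crossRel X ⊆ c by rwa [hcr.antisymm this] at hc
  intro p hp
  obtain ⟨d, hd, hpd⟩ := S.rainbow.1.exists_mem p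
  rwa [S.eq_of_subset_crossRel hc hcr hd (subset_crossRel_of_mem S.jordan S.diagRel_mem hd hpd hp)]

lemma ncard_classesWithin_prod_le (S : TwoFiberJordan P X) :
    (classesWithin P (X ×ˢ X)).ncard ≤ 3 := by
  have hXc : 0 < (classesWithin P (Xᶜ ×ˢ Xᶜ)).ncard :=
    (Set.ncard_pos (Set.toFinite _)).2
      ⟨diagRel Xᶜ, S.diagRel_compl_mem, diagRel_subset_prod subset_rfl⟩
  have hcross : 0 < (classesWithin P (crossRel X)).ncard :=
    (Set.ncard_pos (Set.toFinite _)).2 ⟨crossRel X, S.crossRel_mem, subset_rfl⟩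
  have := ncard_eq_add S.rainbow.1 S.jordan S.diagRel_mem
  have := S.ncard_le
  omega

lemma classesWithin_prod_eq (S : TwoFiberJordan P X) (hc : c ∈ classesWithin P (X ×ˢ X))
    (hd : d ∈ classesWithin P (X ×ˢ X)) (hcX : c ≠ diagRel X) (hdX : d ≠ diagRel X)
    (hcd : c ≠ d) : classesWithin P (X ×ˢ X) = {diagRel X, c, d} := by
  refine (Set.eq_of_subset_of_ncard_le ?_ ?_ (Set.toFinite _)).symm
  · rintro e (rfl | rfl | rfl)
    exacts [⟨S.diagRel_mem, diagRel_subset_prod subset_rfl⟩, hc, hd]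
  · rw [Set.ncard_insert_of_notMem (by simp [hcX.symm, hdX.symm]), Set.ncard_pair hcd]
    exact S.ncard_classesWithin_prod_le

lemma cnum_add_cnum_add_cnum_eq_ncard_outSet (S : TwoFiberJordan P X)
    (hc : c ∈ classesWithin P (X ×ˢ X)) (hd : d ∈ classesWithin P (X ×ˢ X))
    (hcX : c ≠ diagRel X) (hdX : d ≠ diagRel X) (hcd : c ≠ d) {a b : Ω} (hb : b ∈ X) :
    cnum c (diagRel X) a b + cnum c c a b + cnum c d a b = (outSet c a).ncard := by
  have hP := S.rainbow.1
  have hXX : X ×ˢ X = diagRel X ∪ c ∪ d := by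
    rw [← sUnion_classesWithin_prod hP S.jordan S.diagRel_mem,
      S.classesWithin_prod_eq hc hd hcX hdX hcd]
    simp [Set.union_assoc]
  rw [← cnum_union_right (hP.disjoint S.diagRel_mem hc.1 (Ne.symm hcX)),
    ← cnum_union_right (Disjoint.union_left (hP.disjoint S.diagRel_mem hd.1 (Ne.symm hdX))
      (hP.disjoint hc.1 hd.1 hcd)), ← hXX, cnum_prod_right, if_pos hb,
    Set.inter_eq_left.2 (fun _ h => (hc.2 h).2 : outSet c a ⊆ X)]

lemma cnum_eq_of_mem_classesWithin (S : TwoFiberJordan P X)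
    (hc : c ∈ classesWithin P (X ×ˢ X)) (hd : d ∈ classesWithin P (X ×ˢ X)) (hf : f ∈ P)
    {p q : Ω × Ω} (hp : p ∈ f) (hq : q ∈ f) : cnum c d p.1 p.2 = cnum c d q.1 q.2 := by
  have hmem : ∀ e ∈ P, p ∈ e ↔ q ∈ e := fun e he => S.rainbow.1.mem_iff_mem he hf hp hq
  by_cases hpX : p ∈ X ×ˢ X
  swap
  · have hqX : q ∉ X ×ˢ X := fun hqX =>
      hpX (subset_prod_of_mem S.jordan S.diagRel_mem hf hq hqX hp)
    have zero : ∀ {r : Ω × Ω}, r ∉ X ×ˢ X → cnum c d r.1 r.2 = 0 := fun hr =>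
      cnum_eq_zero fun _ h1 h2 => hr ⟨(hc.2 h1).1, (hd.2 h2).2⟩
    rw [zero hpX, zero hqX]
  have hqX : q ∈ X ×ˢ X := subset_prod_of_mem S.jordan S.diagRel_mem hf hp hpX hq
  have hdiag : cnum c (diagRel X) p.1 p.2 = cnum c (diagRel X) q.1 q.2 := by
    simp only [cnum_diagRel_right, Prod.mk.eta, hmem c hc.1, hpX.2, hqX.2]
  by_cases hdX : d = diagRel X
  · subst hdX
    exact hdiag
  by_cases hcX : c = diagRel X
  · subst hcX
    simp only [cnum_diagRel_left, Prod.mk.eta, hmem d hd.1, hpX.1, hqX.1]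
  have hself := cnum_self_eq_of_mem S.jordan hc.1 hf hp hq
  by_cases hcd : c = d
  · subst hcd
    exact hself
  have hdeg := S.ncard_outSet_eq hc.1 (iff_of_true hpX.1 hqX.1)
  have := S.cnum_add_cnum_add_cnum_eq_ncard_outSet hc hd hcX hdX hcd (a := p.1) hpX.2
  have := S.cnum_add_cnum_add_cnum_eq_ncard_outSet hc hd hcX hdX hcd (a := q.1) hqX.2
  omega

lemma isAssocSchemeOn (S : TwoFiberJordan P X) :
    IsAssocSchemeOn X (classesWithin P (X ×ˢ X)) :=
  ⟨⟨fun c hc => S.rainbow.1.1 c hc.1, fun c hc d hd => S.rainbow.1.2.1 c hc.1 d hd.1,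
      sUnion_classesWithin_prod S.rainbow.1 S.jordan S.diagRel_mem⟩,
    ⟨S.diagRel_mem, diagRel_subset_prod subset_rfl⟩,
    fun c hc => by rw [S.symm c hc.1]; exact hc,
    fun _ hc _ hd _ hf _ hp _ hq => S.cnum_eq_of_mem_classesWithin hc hd hf.1 hp hq⟩

end TwoFiberJordan

def symmetrize (D : Set (Set (Ω × Ω))) : Set (Set (Ω × Ω)) :=
  {e | ∃ c ∈ D, e = c ∪ transposeRel c}

section Splitting

variable {P : Set (Set (Ω × Ω))} {c₀ A B : Set (Ω × Ω)}

lemma IsRainbow.diff_union_pair (hR : IsRainbow P) (hc₀ : c₀ ∈ P) (hA : A.Nonempty)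
    (hB : B.Nonempty) (hAB : Disjoint A B) (hunion : A ∪ B = c₀) (hT : transposeRel A = B) :
    IsRainbow (P \ {c₀} ∪ {A, B}) := by
  have hsub : ∀ {c}, c ∈ ({A, B} : Set (Set (Ω × Ω))) → c ⊆ c₀ := by
    rintro c (rfl | rfl)
    exacts [hunion ▸ Set.subset_union_left, hunion ▸ Set.subset_union_right]
  have hT₀ : transposeRel c₀ = c₀ := by
    rw [← hunion, transposeRel_union, hT, ← hT, transposeRel_transposeRel, Set.union_comm]
  have hdisj : ∀ c ∈ P \ {c₀}, ∀ d ∈ P \ {c₀} ∪ {A, B}, c ≠ d → c ∩ d = ∅ := by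
    rintro c ⟨hc, hcc₀⟩ d (⟨hd, -⟩ | hd) hcd
    · exact hR.1.2.1 c hc d hd hcd
    · exact Set.subset_eq_empty (Set.inter_subset_inter_right c (hsub hd))
        (hR.1.2.1 c hc c₀ hc₀ hcc₀)
  refine ⟨⟨?_, ?_, ?_⟩, ?_, ?_⟩
  · rintro c (⟨hc, -⟩ | rfl | rfl)
    exacts [hR.1.1 c hc, hA, hB]
  · rintro c (hc | hc) d (hd | hd) hcd
    · exact hdisj c hc d (Or.inl hd) hcd
    · exact hdisj c hc d (Or.inr hd) hcd
    · rw [Set.inter_comm]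
      exact hdisj d hd c (Or.inr hc) (Ne.symm hcd)
    · rcases hc with rfl | rfl <;> rcases hd with rfl | rfl
      exacts [absurd rfl hcd, Set.disjoint_iff_inter_eq_empty.1 hAB,
        Set.disjoint_iff_inter_eq_empty.1 hAB.symm, absurd rfl hcd]
  · refine Set.sUnion_eq_univ_iff.2 fun p => ?_
    obtain ⟨c, hc, hp⟩ := hR.1.exists_mem p
    by_cases hcc₀ : c = c₀
    · rw [hcc₀, ← hunion] at hp
      rcases hp with hp | hp
      exacts [⟨A, Or.inr (Or.inl rfl), hp⟩, ⟨B, Or.inr (Or.inr rfl), hp⟩]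
    · exact ⟨c, Or.inl ⟨hc, hcc₀⟩, hp⟩
  · rintro c (⟨hc, -⟩ | hc) hne
    · exact hR.2.1 c hc hne
    · exact (hsub hc).trans
        (hR.2.1 c₀ hc₀ (hne.mono (Set.inter_subset_inter_left _ (hsub hc))))
  · rintro c (⟨hc, hcc₀⟩ | rfl | rfl)
    · refine Or.inl ⟨hR.2.2 c hc, fun h => hcc₀ ?_⟩
      rw [← transposeRel_transposeRel c, Set.mem_singleton_iff.1 h, hT₀]
      rfl
    · exact Or.inr (Or.inr hT)
    · exact Or.inr (Or.inl (by rw [← hT, transposeRel_transposeRel]))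

lemma symmetrize_diff_union_pair (hsym : ∀ c ∈ P, transposeRel c = c) (hc₀ : c₀ ∈ P)
    (hunion : A ∪ B = c₀) (hT : transposeRel A = B) : symmetrize (P \ {c₀} ∪ {A, B}) = P := by
  ext e
  constructor
  · rintro ⟨c, ⟨hc, -⟩ | rfl | rfl, rfl⟩
    · rwa [hsym c hc, Set.union_self]
    · rwa [hT, hunion]
    · rwa [← hT, transposeRel_transposeRel, Set.union_comm, hT, hunion]
  · intro he
    by_cases hec₀ : e = c₀
    · exact ⟨A, Or.inr (Or.inl rfl), by rw [hT, hunion, hec₀]⟩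
    · exact ⟨e, Or.inl ⟨he, hec₀⟩, by rw [hsym e he, Set.union_self]⟩

end Splitting

def splitConfig (P : Set (Set (Ω × Ω))) (X : Set Ω) : Set (Set (Ω × Ω)) :=
  classesWithin P (X ×ˢ X) ∪ classesWithin P (Xᶜ ×ˢ Xᶜ) ∪ {X ×ˢ Xᶜ, Xᶜ ×ˢ X}

section SplitConfig

variable {P : Set (Set (Ω × Ω))} {X : Set Ω} {c d f : Set (Ω × Ω)}

lemma splitConfig_compl : splitConfig P Xᶜ = splitConfig P X := by
  rw [splitConfig, splitConfig, compl_compl, Set.union_comm (classesWithin P (Xᶜ ×ˢ Xᶜ)),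
    Set.pair_comm]

lemma mem_iff_of_mem_splitConfig (hf : f ∈ splitConfig P X) {p q : Ω × Ω} (hp : p ∈ f)
    (hq : q ∈ f) : (p.1 ∈ X ↔ q.1 ∈ X) ∧ (p.2 ∈ X ↔ q.2 ∈ X) := by
  rcases hf with (⟨-, hf⟩ | ⟨-, hf⟩) | rfl | rfl
  all_goals
    first
    | have hp' := hf hp; have hq' := hf hq
    | have hp' := hp; have hq' := hq
    simp only [Set.mem_prod, Set.mem_compl_iff] at hp' hq'
    tauto

namespace TwoFiberJordan

variable [Finite Ω]

lemma splitConfig_eq (S : TwoFiberJordan P X) :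
    splitConfig P X = P \ {crossRel X} ∪ {X ×ˢ Xᶜ, Xᶜ ×ˢ X} := by
  have hne : ∀ {c R}, c ∈ P → c ⊆ R → Disjoint R (crossRel X) → c ≠ crossRel X := by
    rintro c R hc hcR hR rfl
    obtain ⟨p, hp⟩ := S.rainbow.1.1 _ hc
    exact Set.disjoint_left.1 hR (hcR hp) hp
  ext c
  constructor
  · rintro ((⟨hc, hcX⟩ | ⟨hc, hcX⟩) | hc)
    · exact Or.inl ⟨hc, hne hc hcX disjoint_prod_crossRel⟩
    · exact Or.inl ⟨hc, hne hc hcX disjoint_compl_prod_crossRel⟩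
    · exact Or.inr hc
  · rintro (⟨hc, hcr⟩ | hc)
    · rcases subset_prod_or_subset_compl_prod_or_subset_crossRel S.rainbow.1 S.jordan
        S.diagRel_mem hc with h | h | h
      · exact Or.inl (Or.inl ⟨hc, h⟩)
      · exact Or.inl (Or.inr ⟨hc, h⟩)
      · exact absurd (S.eq_of_subset_crossRel hc h S.crossRel_mem subset_rfl) hcr
    · exact Or.inr hc

lemma exists_superset_of_mem_splitConfig (S : TwoFiberJordan P X)
    (hf : f ∈ splitConfig P X) : ∃ f' ∈ P, f ⊆ f' := by
  rcases hf with (⟨hf, -⟩ | ⟨hf, -⟩) | rfl | rfl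
  · exact ⟨f, hf, subset_rfl⟩
  · exact ⟨f, hf, subset_rfl⟩
  · exact ⟨crossRel X, S.crossRel_mem, Set.subset_union_left⟩
  · exact ⟨crossRel X, S.crossRel_mem, Set.subset_union_right⟩

lemma cnum_eq_of_mem_classesWithin_or_eq_compl_prod (S : TwoFiberJordan P X)
    (hc : c ∈ classesWithin P (X ×ˢ X) ∨ c = Xᶜ ×ˢ X) (hd : d ∈ splitConfig P X)
    (hf : f ∈ splitConfig P X) {p q : Ω × Ω} (hp : p ∈ f) (hq : q ∈ f) :
    cnum c d p.1 p.2 = cnum c d q.1 q.2 := by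
  obtain ⟨h1, h2⟩ := mem_iff_of_mem_splitConfig hf hp hq
  have hcX : ∀ {a γ : Ω}, (a, γ) ∈ c → γ ∈ X := by
    rcases hc with hc | rfl
    exacts [fun h => (hc.2 h).2, fun h => h.2]
  rcases hd with (hd | hd) | rfl | rfl
  · rcases hc with hc | rfl
    · obtain ⟨f', hf', hff'⟩ := S.exists_superset_of_mem_splitConfig hf
      exact S.cnum_eq_of_mem_classesWithin hc hd hf' (hff' hp) (hff' hq)
    · have hdX : ∀ b, X ∩ outSet (transposeRel d) b = outSet d b := fun b => by
        rw [S.symm d hd.1, Set.inter_eq_right]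
        exact fun _ h => (hd.2 h).2
      simp only [cnum_prod_left, hdX, Set.mem_compl_iff, h1, S.ncard_outSet_eq hd.1 h2]
  · rw [cnum_eq_zero fun _ h h' => (hd.2 h').1 (hcX h),
      cnum_eq_zero fun _ h h' => (hd.2 h').1 (hcX h)]
  · rcases hc with hc | rfl
    · have hcX' : ∀ a, outSet c a ∩ X = outSet c a := fun a =>
        Set.inter_eq_left.2 fun _ h => (hc.2 h).2
      simp only [cnum_prod_right, hcX', Set.mem_compl_iff, h2, S.ncard_outSet_eq hc.1 h1]
    · simp only [cnum_prod_left, transposeRel_prod, outSet_prod, Set.mem_compl_iff, h1, h2]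
  · rw [cnum_eq_zero fun _ h h' => h'.1 (hcX h), cnum_eq_zero fun _ h h' => h'.1 (hcX h)]

lemma isCoherentCond_splitConfig (S : TwoFiberJordan P X) :
    IsCoherentCond (splitConfig P X) := by
  intro c hc d hd f hf p hp q hq
  rcases hc with (hc | hc) | rfl | rfl
  · exact S.cnum_eq_of_mem_classesWithin_or_eq_compl_prod (Or.inl hc) hd hf hp hq
  · rw [← splitConfig_compl] at hd hf
    exact S.compl.cnum_eq_of_mem_classesWithin_or_eq_compl_prod (Or.inl hc) hd hf hp hq
  · rw [← splitConfig_compl] at hd hf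
    exact S.compl.cnum_eq_of_mem_classesWithin_or_eq_compl_prod
      (Or.inr (by rw [compl_compl])) hd hf hp hq
  · exact S.cnum_eq_of_mem_classesWithin_or_eq_compl_prod (Or.inr rfl) hd hf hp hq

lemma isCoherentConfig_splitConfig (S : TwoFiberJordan P X) :
    IsCoherentConfig (splitConfig P X) := by
  refine ⟨?_, S.isCoherentCond_splitConfig⟩
  rw [S.splitConfig_eq]
  exact S.rainbow.diff_union_pair S.crossRel_mem (S.nonempty.prod S.compl.nonempty)
    (S.compl.nonempty.prod S.nonempty) (Set.disjoint_prod.2 (Or.inl disjoint_compl_right)) rfl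
    (transposeRel_prod _ _)

lemma symmetrize_splitConfig (S : TwoFiberJordan P X) : symmetrize (splitConfig P X) = P := by
  rw [S.splitConfig_eq]
  exact symmetrize_diff_union_pair S.symm S.crossRel_mem rfl (transposeRel_prod _ _)

end TwoFiberJordan

end SplitConfig

section Algebra

variable {F : Type*} {D : Set (Set (Ω × Ω))} {c d : Set (Ω × Ω)}

def constOnClasses (F : Type*) [Semiring F] (D : Set (Set (Ω × Ω))) :
    Submodule F (Matrix Ω Ω F) where
  carrier := {x | ∀ f ∈ D, ∀ p ∈ f, ∀ q ∈ f, x p.1 p.2 = x q.1 q.2}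
  add_mem' hx hy f hf p hp q hq := by
    simp only [Matrix.add_apply, hx f hf p hp q hq, hy f hf p hp q hq]
  zero_mem' _ _ _ _ _ _ := rfl
  smul_mem' r x hx f hf p hp q hq := by simp only [Matrix.smul_apply, hx f hf p hp q hq]

lemma adj_apply [Zero F] [One F] (c : Set (Ω × Ω)) (a b : Ω) :
    adj F c a b = if (a, b) ∈ c then 1 else 0 := rfl

lemma adj_mul_adj_apply [Fintype Ω] [Semiring F] (a b : Ω) :
    (adj F c * adj F d) a b = cnum c d a b := by
  simp only [Matrix.mul_apply, adj_apply, mul_ite, mul_one, mul_zero, ← ite_and,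
    Finset.sum_boole, cnum]
  rw [← Set.ncard_coe_finset]
  congr 2
  ext γ
  simp [and_comm]

lemma adj_mem_constOnClasses [Semiring F] (hD : IsPartition D) (hc : c ∈ D) :
    adj F c ∈ constOnClasses F D := fun f hf p hp q hq => by
  simp only [adj_apply, Prod.mk.eta, hD.mem_iff_mem hc hf hp hq]

lemma span_adj_eq [Finite Ω] [Semiring F] (hD : IsPartition D) :
    Submodule.span F (adj F '' D) = constOnClasses F D := by
  refine le_antisymm (Submodule.span_le.2 ?_) fun x hx => ?_
  · rintro _ ⟨c, hc, rfl⟩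
    exact adj_mem_constOnClasses hD hc
  have hfin : D.Finite := Set.toFinite D
  let val : Set (Ω × Ω) → F := fun c => if h : c.Nonempty then x h.some.1 h.some.2 else 0
  have hx_eq : x = ∑ c ∈ hfin.toFinset, val c • adj F c := by
    ext a b
    obtain ⟨c₀, hc₀, hab⟩ := hD.exists_mem (a, b)
    rw [Matrix.sum_apply, Finset.sum_eq_single c₀]
    · simp only [Matrix.smul_apply, adj_apply, if_pos hab, smul_eq_mul, mul_one, val]
      rw [dif_pos ⟨_, hab⟩]
      exact hx c₀ hc₀ _ hab _ (Set.Nonempty.some_mem _)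
    · intro c hc hcc₀
      rw [Matrix.smul_apply, adj_apply, if_neg fun h => hcc₀
        (hD.eq_of_mem_of_mem (hfin.mem_toFinset.1 hc) hc₀ h hab), smul_zero]
    · exact fun h => absurd (hfin.mem_toFinset.2 hc₀) h
  rw [hx_eq]
  exact Submodule.sum_mem _ fun c hc =>
    Submodule.smul_mem _ _ (Submodule.subset_span ⟨c, hfin.mem_toFinset.1 hc, rfl⟩)

lemma isCoherentAlgebra_constOnClasses [Fintype Ω] [DecidableEq Ω] [Field F]
    (hD : IsCoherentConfig D) : IsCoherentAlgebra F (constOnClasses F D) := by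
  obtain ⟨hR, hC⟩ := hD
  refine ⟨fun f hf p hp q hq => ?_, fun _ _ _ _ _ _ => rfl,
    fun x hx f hf p hp q hq => hx (transposeRel f) (hR.2.2 f hf) (p.2, p.1) hp (q.2, q.1) hq,
    fun x hx y hy => ?_, fun x hx y hy f hf p hp q hq => ?_⟩
  · simp only [Matrix.one_apply, hR.fst_eq_snd_iff hf hp hq]
  · rw [← span_adj_eq hR.1] at hx hy
    have hxy := Submodule.mul_mem_mul hx hy
    rw [Submodule.span_mul_span] at hxy
    refine Submodule.span_le.2 ?_ hxy
    rintro _ ⟨_, ⟨c, hc, rfl⟩, _, ⟨d, hd, rfl⟩, rfl⟩ f hf p hp q hq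
    simp only [adj_mul_adj_apply, hC c hc d hd f hf p hp q hq]
  · simp only [Matrix.hadamard_apply, hx f hf p hp q hq, hy f hf p hp q hq]

lemma constOnClasses_eq_of_symmetrize_eq [Semiring F] {P : Set (Set (Ω × Ω))}
    (hDP : symmetrize D = P) (hD : ⋃₀ D = Set.univ) :
    (constOnClasses F P : Set (Matrix Ω Ω F)) = {x | x ∈ constOnClasses F D ∧ xᵀ = x} := by
  subst hDP
  ext x
  constructor
  · intro hx
    refine ⟨fun f hf p hp q hq => hx _ ⟨f, hf, rfl⟩ p (Or.inl hp) q (Or.inl hq), ?_⟩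
    ext a b
    obtain ⟨c, hc, hab⟩ := Set.sUnion_eq_univ_iff.1 hD (a, b)
    exact hx _ ⟨c, hc, rfl⟩ (b, a) (Or.inr hab) (a, b) (Or.inl hab)
  · rintro ⟨hx, hxt⟩ _ ⟨c, hc, rfl⟩ p hp q hq
    have key : ∀ r ∈ c ∪ transposeRel c, ∃ r' ∈ c, x r.1 r.2 = x r'.1 r'.2 := by
      rintro r (hr | hr)
      · exact ⟨r, hr, rfl⟩
      · exact ⟨(r.2, r.1), hr, congrFun (congrFun hxt r.2) r.1⟩
    obtain ⟨p', hp', hpp'⟩ := key p hp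
    obtain ⟨q', hq', hqq'⟩ := key q hq
    rw [hpp', hqq']
    exact hx c hc p' hp' q' hq'

end Algebra

theorem statement11 {Ω : Type*} [Fintype Ω] [DecidableEq Ω] [Nonempty Ω]
    (P : Set (Set (Ω × Ω))) (hJC : IsJordanConfig P)
    (hsym : ∀ c ∈ P, transposeRel c = c)
    (hrank : P.ncard ≤ 5)
    (hnothom : diagRel (Set.univ : Set Ω) ∉ P) :
    ∃ Ω₁ Ω₂ : Set Ω,
      Ω₁.Nonempty ∧ Ω₂.Nonempty ∧ Ω₁ ∩ Ω₂ = ∅ ∧ Ω₁ ∪ Ω₂ = Set.univ ∧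
      diagRel Ω₁ ∈ P ∧ diagRel Ω₂ ∈ P ∧
      (∀ Δ : Set Ω, Δ.Nonempty → diagRel Δ ∈ P → Δ = Ω₁ ∨ Δ = Ω₂) ∧
      ((Ω₁ ×ˢ Ω₂) ∪ (Ω₂ ×ˢ Ω₁)) ∈ P ∧
      IsAssocSchemeOn Ω₁ {c | c ∈ P ∧ c ⊆ Ω₁ ×ˢ Ω₁} ∧
      IsAssocSchemeOn Ω₂ {c | c ∈ P ∧ c ⊆ Ω₂ ×ˢ Ω₂} ∧
      (∀ c ∈ P, c ⊆ Ω₁ ×ˢ Ω₁ → transposeRel c = c) ∧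
      (∀ c ∈ P, c ⊆ Ω₂ ×ˢ Ω₂ → transposeRel c = c) ∧
      (let D : Set (Set (Ω × Ω)) :=
        {c | c ∈ P ∧ c ⊆ Ω₁ ×ˢ Ω₁} ∪ {c | c ∈ P ∧ c ⊆ Ω₂ ×ˢ Ω₂} ∪ {Ω₁ ×ˢ Ω₂, Ω₂ ×ˢ Ω₁}
       IsCoherentConfig D ∧ {e | ∃ c ∈ D, e = c ∪ transposeRel c} = P) ∧
      (∃ B : Submodule ℝ (Matrix Ω Ω ℝ), IsCoherentAlgebra ℝ B ∧
        (Submodule.span ℝ (adj ℝ '' P) : Set (Matrix Ω Ω ℝ)) = {x | x ∈ B ∧ xᵀ = x}) := by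
  obtain ⟨hR, hJ⟩ := hJC
  obtain ⟨X, -, hX⟩ := hR.exists_diagRel_mem (Classical.arbitrary Ω)
  obtain ⟨z, hz⟩ : ∃ z, z ∉ X := by
    by_contra! h
    exact hnothom (Set.eq_univ_of_forall h ▸ hX)
  obtain ⟨Y, hzY, hY⟩ := hR.exists_diagRel_mem z
  have hYX : Y = Xᶜ := hR.eq_compl_of_diagRel_mem hJ hrank hX hY fun h => hz (h ▸ hzY)
  have S : TwoFiberJordan P X := ⟨hR, hJ, hsym, hrank, hX, hYX ▸ hY⟩
  refine ⟨X, Xᶜ, S.nonempty, S.compl.nonempty, Set.inter_compl_self X, Set.union_compl_self X,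
    hX, S.diagRel_compl_mem, fun _ => S.eq_or_eq_of_diagRel_mem, S.crossRel_mem,
    S.isAssocSchemeOn, S.compl.isAssocSchemeOn, fun c hc _ => hsym c hc, fun c hc _ => hsym c hc,
    ⟨S.isCoherentConfig_splitConfig, S.symmetrize_splitConfig⟩, constOnClasses ℝ (splitConfig P X),
    isCoherentAlgebra_constOnClasses S.isCoherentConfig_splitConfig, ?_⟩
  rw [span_adj_eq hR.1]
  exact constOnClasses_eq_of_symmetrize_eq S.symmetrize_splitConfig
    S.isCoherentConfig_splitConfig.1.1.2.2

end JordanPaper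

end
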